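/- Injectivity of the principal symbol of the prescribed (self-dual Weyl, scalar curvature, harmonic gauge) operator: let ξ ∈ ℝ⁴ with ξ ≠ 0 and let h be a real symmetric 4×4 matrix, viewed as a symmetric bilinear form on ℝ⁴. Suppose (a) h(v_i(ξ), v_j(ξ)) − (1/3)·(Σ_{k=1}^{3} h(v_k(ξ), v_k(ξ)))·δ_{ij}·|ξ|² = 0 for all i, j ∈ {1,2,3} (vanishing of the traceless self-dual block h_{Λ⁺}); (b) −tr(h)·|ξ|² + h(ξ, ξ) = 0 (vanishing of the scalar curvature symbol); and (c) h·ξ − (1/2)·tr(h)·ξ = 0 as a vector in ℝ⁴ (vanishing of the tension field symbol). Then h = 0. -/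
import Mathlib


open Matrix

noncomputable section

/-- `v₁(ξ) = (ξ₂, −ξ₁, ξ₄, −ξ₃)` (indices shifted to start at 0). -/
def v1 (ξ : Fin 4 → ℝ) : Fin 4 → ℝ := ![ξ 1, -ξ 0, ξ 3, -ξ 2]

/-- `v₂(ξ) = (ξ₃, −ξ₄, −ξ₁, ξ₂)`. -/
def v2 (ξ : Fin 4 → ℝ) : Fin 4 → ℝ := ![ξ 2, -ξ 3, -ξ 0, ξ 1]

/-- `v₃(ξ) = (ξ₄, ξ₃, −ξ₂, −ξ₁)`. -/
def v3 (ξ : Fin 4 → ℝ) : Fin 4 → ℝ := ![ξ 3, ξ 2, -ξ 1, -ξ 0]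

/-- The family `v₁, v₂, v₃` indexed by `Fin 3`. -/
def vv (ξ : Fin 4 → ℝ) : Fin 3 → Fin 4 → ℝ := ![v1 ξ, v2 ξ, v3 ξ]

/-- The Euclidean norm of a vector in `ℝ⁴`. -/
def enorm4 (x : Fin 4 → ℝ) : ℝ := ‖(WithLp.equiv 2 (Fin 4 → ℝ)).symm x‖

/-- The symmetric bilinear form attached to a symmetric matrix: `h(u,w) = uᵀ h w`. -/
def bil (h : Matrix (Fin 4) (Fin 4) ℝ) (u w : Fin 4 → ℝ) : ℝ := u ⬝ᵥ (h *ᵥ w)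


set_option maxHeartbeats 2000000 in
/-- Injectivity of the principal symbol of the prescribed
(self-dual Weyl, scalar curvature, harmonic gauge) operator: if for `ξ ≠ 0` the
traceless self-dual block of `h`, the scalar curvature symbol, and the tension
field symbol all vanish, then `h = 0`.  (Here `|ξ|² = ξ ⬝ᵥ ξ`.) -/
theorem principal_symbol_injective (ξ : Fin 4 → ℝ) (hξ : ξ ≠ 0)
    (h : Matrix (Fin 4) (Fin 4) ℝ) (hsymm : h.IsSymm)
    (ha : ∀ i j : Fin 3, bil h (vv ξ i) (vv ξ j) -
      (1 / 3) * (∑ k : Fin 3, bil h (vv ξ k) (vv ξ k)) *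
        (if i = j then 1 else 0) * (ξ ⬝ᵥ ξ) = 0)
    (hb : -h.trace * (ξ ⬝ᵥ ξ) + bil h ξ ξ = 0)
    (hc : h *ᵥ ξ - ((1 / 2) * h.trace) • ξ = 0) :
    h = 0 := by

  have hq : ξ ⬝ᵥ ξ ≠ 0 := fun e => hξ (dotProduct_self_eq_zero.mp e)
  set q : ℝ := ξ ⬝ᵥ ξ with hqdef
  -- Step 1: trace of h vanishes
  have h1 : h *ᵥ ξ = ((1/2) * h.trace) • ξ := by
    have := hc; rwa [sub_eq_zero] at this
  have h2 : bil h ξ ξ = ((1/2) * h.trace) * q := by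
    rw [bil, h1, dotProduct_smul, smul_eq_mul]
  have htr : h.trace = 0 := by
    have hb' := hb
    rw [h2] at hb'
    have hqq : h.trace * q = 0 := by ring_nf at hb' ⊢; linarith
    exact (mul_eq_zero.mp hqq).resolve_right hq
  have hξ0 : h *ᵥ ξ = 0 := by rw [h1, htr]; simp
  -- bil values involving ξ vanish
  have hz1 : ∀ w, bil h w ξ = 0 := by
    intro w; rw [bil, hξ0, dotProduct_zero]
  have hz2 : ∀ w, bil h ξ w = 0 := by
    intro w
    rw [bil, dotProduct_mulVec, ← mulVec_transpose, hsymm.eq, hξ0, zero_dotProduct]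
  -- sum of diagonal self-dual values vanishes
  have key : bil h ξ ξ + ∑ k : Fin 3, bil h (vv ξ k) (vv ξ k) = h.trace * q := by
    simp only [bil, vv, v1, v2, v3, dotProduct, Matrix.mulVec, Matrix.trace,
      Matrix.diag, Fin.sum_univ_four, Fin.sum_univ_three, Matrix.cons_val_zero,
      Matrix.cons_val_one, Matrix.head_cons, Matrix.cons_val_two, Matrix.tail_cons,
      Matrix.cons_val_three, hqdef]
    ring
  have hsum : ∑ k : Fin 3, bil h (vv ξ k) (vv ξ k) = 0 := by
    rw [hz1 ξ] at key; rw [htr] at key; linarith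
  have hbil : ∀ i j : Fin 3, bil h (vv ξ i) (vv ξ j) = 0 := by
    intro i j
    have := ha i j
    rw [hsum] at this
    simpa using this
  -- the frame matrix
  set r : Fin 4 → Fin 4 → ℝ := ![ξ, vv ξ 0, vv ξ 1, vv ξ 2] with hr
  set M : Matrix (Fin 4) (Fin 4) ℝ := Matrix.of r with hM
  have entry : ∀ i j, (M * h * Mᵀ) i j = bil h (r i) (r j) := by
    intro i j
    simp only [Matrix.mul_apply, bil, dotProduct, Matrix.mulVec, Matrix.transpose_apply,
      hM, Matrix.of_apply, Fin.sum_univ_four]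
    ring
  have hM0 : M * h * Mᵀ = 0 := by
    ext i j
    rw [entry i j]
    fin_cases i <;> fin_cases j <;> simp [hr, hz1, hz2, hbil]
  have hMMT : M * Mᵀ = q • (1 : Matrix (Fin 4) (Fin 4) ℝ) := by
    ext i j
    fin_cases i <;> fin_cases j <;>
      simp [hM, hr, vv, v1, v2, v3, Matrix.mul_apply, Fin.sum_univ_four,
        Matrix.one_apply, hqdef, dotProduct, Matrix.vecHead, Matrix.vecTail,
        Matrix.transpose_apply, Function.comp] <;> ring
  have hinv : M * ((1/q) • Mᵀ) = 1 := by
    rw [Matrix.mul_smul, hMMT, smul_smul, one_div, inv_mul_cancel₀ hq, one_smul]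
  have hinv2 : ((1/q) • Mᵀ) * M = 1 := mul_eq_one_comm.mp hinv
  have hMTM : Mᵀ * M = q • (1 : Matrix (Fin 4) (Fin 4) ℝ) := by
    have := congrArg (fun A => q • A) hinv2
    simp only [Matrix.smul_mul, smul_smul] at this
    rw [mul_one_div, div_self hq, one_smul] at this
    rw [this]
  have hzero : (q * q) • h = 0 := by
    have e1 : Mᵀ * (M * h * Mᵀ) * M = 0 := by rw [hM0]; simp
    calc (q * q) • h = (q • (1 : Matrix (Fin 4) (Fin 4) ℝ)) * h * (q • 1) := by
          simp [Matrix.smul_mul, Matrix.mul_smul, smul_smul]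
      _ = Mᵀ * (M * h * Mᵀ) * M := by rw [← hMTM]; noncomm_ring
      _ = 0 := e1
  have hq2 : q * q ≠ 0 := mul_ne_zero hq hq
  have := smul_eq_zero.mp hzero
  exact this.resolve_left hq2
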